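/- Let μ : A* → A* be a substitution and k ≥ 0. If ((m_i, a_i))_{i=0,...,k} is an admissible sequence with respect to μ (i.e., for every i ∈ {1,...,k}, the word m_{i-1}a_{i-1} is a prefix of μ(a_i)), then Σ_{i=0}^{k} |μ^i(m_i)| < |μ^k(m_k a_k)|. -/

import Mathlib

/-- `substApp μ n w` is `μ^n(w)`: the `n`-fold application of the substitution `μ`
(extended to words by concatenation) to the word `w`. -/
def substApp {A : Type*} (μ : A → List A) (n : ℕ) (w : List A) : List A :=
  (fun v => v.flatMap μ)^[n] w

section

variable {A : Type*} (μ : A → List A)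

theorem substApp_succ (n : ℕ) (w : List A) :
    substApp μ (n + 1) w = substApp μ n (w.flatMap μ) :=
  Function.iterate_succ_apply _ n w

theorem substApp_append (n : ℕ) (u v : List A) :
    substApp μ n (u ++ v) = substApp μ n u ++ substApp μ n v := by
  induction n generalizing u v with
  | zero => rfl
  | succ n ih => rw [substApp_succ, substApp_succ, substApp_succ, List.flatMap_append, ih]

theorem List.IsPrefix.substApp {u v : List A} (h : u <+: v) (n : ℕ) :
    substApp μ n u <+: substApp μ n v := by
  obtain ⟨t, rfl⟩ := h
  exact ⟨_, (substApp_append μ n u t).symm⟩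

end

theorem stmt4_general {A : Type*} (μ : A → List A) (k : ℕ)
    (m : ℕ → List A) (a : ℕ → A)
    (hadm : ∀ i, 1 ≤ i → i ≤ k → (m (i - 1) ++ [a (i - 1)]) <+: μ (a i)) :
    ∑ i ∈ Finset.range (k + 1), (substApp μ i (m i)).length
      < (substApp μ k (m k ++ [a k])).length := by
  induction k with
  | zero => simp [substApp]
  | succ k ih =>
    have hprev := ih fun i h1 h2 => hadm i h1 (by omega)
    have hstep :
        (substApp μ k (m k ++ [a k])).length ≤ (substApp μ (k + 1) [a (k + 1)]).length := by
      rw [substApp_succ, List.flatMap_singleton]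
      exact ((hadm (k + 1) (by omega) le_rfl).substApp μ k).length_le
    rw [Finset.sum_range_succ, substApp_append, List.length_append]
    omega

/-- Dumont–Thomas, Lemma 1.1: if `((m_i, a_i))_{i=0,...,k}` is admissible with
respect to `μ` (i.e. `m_{i-1} a_{i-1}` is a prefix of `μ(a_i)` for `1 ≤ i ≤ k`),
then `∑_{i=0}^{k} |μ^i(m_i)| < |μ^k(m_k a_k)|`. -/
theorem stmt4 {A : Type*} (μ : A → List A) (hne : ∀ c, μ c ≠ []) (k : ℕ)
    (m : ℕ → List A) (a : ℕ → A)
    (hadm : ∀ i, 1 ≤ i → i ≤ k → (m (i - 1) ++ [a (i - 1)]) <+: μ (a i)) :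
    ∑ i ∈ Finset.range (k + 1), (substApp μ i (m i)).length
      < (substApp μ k (m k ++ [a k])).length :=
  stmt4_general μ k m a hadm
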